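/- arXiv:2512.15749 — 3 statements merged into one kernel-verified Lean document; each statement's English description precedes it below -/
import Mathlib

section
/- Let d ≥ 1, let γ be the standard Gaussian measure on ℝ^{d+1}, let x_i, x_j ∈ ℝ^d, and let v ∈ ℝ^d with v ≠ 0; write x̂_i = [x_i | 1], x̂_j = [x_j | 1], v̂ = [v | 0]. For t ∈ ℝ define K(t) = ∫ ( ⟨x̂_i − t·v̂, x̂_j − t·v̂⟩ + ⟨w, x̂_i − t·v̂⟩·⟨w, x̂_j − t·v̂⟩ ) · 𝟙(⟨w, x̂_i − t·v̂⟩ ≥ 0) · 𝟙(⟨w, x̂_j − t·v̂⟩ ≥ 0) dγ(w). Then lim_{t→∞} K(t)/t² = κ, where κ = ∫ ( ‖v̂‖² + ⟨w, v̂⟩² ) · 𝟙(⟨w, v̂⟩ ≤ 0) dγ(w). -/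
open MeasureTheory ProbabilityTheory Filter

lemma my_measurePreserving_eval {ι : Type*} [Fintype ι] [DecidableEq ι] {α : ι → Type*}
    [∀ i, MeasurableSpace (α i)] (μ : ∀ i, Measure (α i)) [∀ i, IsProbabilityMeasure (μ i)]
    (i : ι) : MeasurePreserving (Function.eval i) (Measure.pi μ) (μ i) := by
  refine ⟨measurable_pi_apply i, ?_⟩
  refine Measure.ext fun s hs => ?_
  rw [Measure.map_apply (measurable_pi_apply i) hs, Set.eval_preimage, Measure.pi_pi]
  rw [Finset.prod_eq_single i (fun j _ hj => by simp [Function.update_of_ne hj]) (by simp)]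
  simp

lemma my_integrable_sq_gaussian : Integrable (fun x : ℝ => x ^ 2) (gaussianReal 0 1) := by
  rw [gaussianReal_of_var_ne_zero 0 one_ne_zero,
    integrable_withDensity_iff (measurable_gaussianPDF 0 1)
      (ae_of_all _ fun x => ENNReal.ofReal_lt_top)]
  have hint : Integrable (fun x : ℝ => x ^ 2 * Real.exp (-(1/2) * x ^ 2)) := by
    have := integrable_rpow_mul_exp_neg_mul_sq (b := 1/2) (by norm_num) (s := 2) (by norm_num)
    have h2 : ∀ x : ℝ, x ^ (2 : ℝ) = x ^ (2 : ℕ) := fun x => by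
      rw [show (2:ℝ) = ((2:ℕ):ℝ) by norm_num, Real.rpow_natCast]
    simpa [h2] using this
  refine (hint.const_mul ((Real.sqrt (2 * Real.pi * 1))⁻¹)).congr ?_
  refine ae_of_all _ fun x => ?_
  simp only [gaussianPDF_def, gaussianPDFReal, NNReal.coe_one, mul_one, sub_zero]
  rw [ENNReal.toReal_ofReal (by positivity)]
  rw [show Real.exp (-(1/2) * x ^ 2) = Real.exp (-x ^ 2 / 2) by
    rw [show -(1/2:ℝ) * x ^ 2 = -x ^ 2 / 2 by ring]]
  ring

lemma my_null (n : ℕ) (u : Fin (n+1) → ℝ) (k0 : Fin (n+1)) (hk : u k0 ≠ 0) :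
    (Measure.pi fun _ : Fin (n+1) => gaussianReal 0 1) {w | ∑ k, w k * u k = 0} = 0 := by
  have hmeas : MeasurableSet {w : Fin (n+1) → ℝ | ∑ k, w k * u k = 0} :=
    measurableSet_eq_fun (by fun_prop) measurable_const
  set e := MeasurableEquiv.piFinSuccAbove (fun _ : Fin (n+1) => ℝ) k0 with he
  have mp := measurePreserving_piFinSuccAbove (fun _ : Fin (n+1) => gaussianReal 0 1) k0
  have hSe : {w : Fin (n+1) → ℝ | ∑ k, w k * u k = 0}
      = e ⁻¹' (e.symm ⁻¹' {w | ∑ k, w k * u k = 0}) := by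
    rw [← Set.preimage_comp]; simp
  rw [hSe, mp.measure_preimage ((e.symm.measurable hmeas).nullMeasurableSet)]
  have htm : MeasurableSet (e.symm ⁻¹' {w : Fin (n+1) → ℝ | ∑ k, w k * u k = 0}) :=
    e.symm.measurable hmeas
  rw [Measure.prod_apply_symm htm]
  have hslice : ∀ y : Fin n → ℝ,
      ((fun x => (x, y)) ⁻¹' (e.symm ⁻¹' {w : Fin (n+1) → ℝ | ∑ k, w k * u k = 0}))
        = {(-(∑ j, y j * u (k0.succAbove j))) / u k0} := by
    intro y
    ext x
    simp only [Set.mem_preimage, Set.mem_setOf_eq, Set.mem_singleton_iff, he]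
    rw [Fin.sum_univ_succAbove _ k0]
    simp only [MeasurableEquiv.piFinSuccAbove_symm_apply, Fin.insertNthEquiv_apply,
      Fin.insertNth_apply_same, Fin.insertNth_apply_succAbove]
    rw [eq_div_iff hk]
    constructor <;> intro h <;> linarith
  simp only [hslice]
  have h0 : ∀ c : ℝ, gaussianReal 0 1 {c} = 0 := fun c =>
    gaussianReal_absolutelyContinuous 0 one_ne_zero (measure_singleton c)
  simp [h0]

lemma aux_main (n : ℕ) (a b u : Fin (n+1) → ℝ) (k0 : Fin (n+1)) (hk : u k0 ≠ 0) :
    Tendsto (fun t : ℝ => (∫ w, ((∑ k, (a k - t * u k) * (b k - t * u k)) +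
        (∑ k, w k * (a k - t * u k)) * (∑ k, w k * (b k - t * u k))) *
        (if 0 ≤ ∑ k, w k * (a k - t * u k) then (1:ℝ) else 0) *
        (if 0 ≤ ∑ k, w k * (b k - t * u k) then (1:ℝ) else 0)
        ∂(Measure.pi fun _ : Fin (n+1) => gaussianReal 0 1)) / t ^ 2)
      atTop (nhds (∫ w, ((∑ k, u k * u k) + (∑ k, w k * u k) ^ 2) *
        (if (∑ k, w k * u k) ≤ 0 then (1:ℝ) else 0)
        ∂(Measure.pi fun _ : Fin (n+1) => gaussianReal 0 1))) := by
  set γ := Measure.pi fun _ : Fin (n+1) => gaussianReal 0 1 with hγ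
  have hsum : ∀ (c : Fin (n+1) → ℝ) (t : ℝ) (w : Fin (n+1) → ℝ),
      ∑ k, w k * (c k - t * u k) = (∑ k, w k * c k) - t * ∑ k, w k * u k := by
    intro c t w
    rw [Finset.mul_sum, ← Finset.sum_sub_distrib]
    exact Finset.sum_congr rfl fun k _ => by ring
  set F : ℝ → (Fin (n+1) → ℝ) → ℝ := fun t w =>
    (((∑ k, (a k - t * u k) * (b k - t * u k)) +
      ((∑ k, w k * a k) - t * ∑ k, w k * u k) * ((∑ k, w k * b k) - t * ∑ k, w k * u k)) *
      (if 0 ≤ (∑ k, w k * a k) - t * ∑ k, w k * u k then (1:ℝ) else 0) *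
      (if 0 ≤ (∑ k, w k * b k) - t * ∑ k, w k * u k then (1:ℝ) else 0)) / t ^ 2 with hF
  have hKt : ∀ t : ℝ, (∫ w, ((∑ k, (a k - t * u k) * (b k - t * u k)) +
        (∑ k, w k * (a k - t * u k)) * (∑ k, w k * (b k - t * u k))) *
        (if 0 ≤ ∑ k, w k * (a k - t * u k) then (1:ℝ) else 0) *
        (if 0 ≤ ∑ k, w k * (b k - t * u k) then (1:ℝ) else 0) ∂γ) / t ^ 2
      = ∫ w, F t w ∂γ := by
    intro t
    rw [← integral_div]
    refine integral_congr_ae (ae_of_all _ fun w => ?_)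
    rw [hF]
    simp only
    rw [hsum a t w, hsum b t w]
  refine Tendsto.congr (fun t => (hKt t).symm) ?_
  -- measurability of basic sums
  have hpm : Measurable fun w : Fin (n+1) → ℝ => ∑ k, w k * a k :=
    Finset.measurable_sum Finset.univ fun k _ => (measurable_pi_apply k).mul_const _
  have hqm : Measurable fun w : Fin (n+1) → ℝ => ∑ k, w k * b k :=
    Finset.measurable_sum Finset.univ fun k _ => (measurable_pi_apply k).mul_const _
  have hsm : Measurable fun w : Fin (n+1) → ℝ => ∑ k, w k * u k :=
    Finset.measurable_sum Finset.univ fun k _ => (measurable_pi_apply k).mul_const _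
  -- integrability facts
  have hsq : ∀ k, Integrable (fun w : Fin (n+1) → ℝ => (w k)^2) γ := by
    intro k
    have hmp := my_measurePreserving_eval (fun _ : Fin (n+1) => gaussianReal 0 1) k
    have := (hmp.integrable_comp
      ((measurable_id.pow_const 2).aestronglyMeasurable)).2 my_integrable_sq_gaussian
    simpa [Function.comp_def, Function.eval] using this
  have habsint : ∀ k l, Integrable (fun w : Fin (n+1) → ℝ => |w k| * |w l|) γ := by
    intro k l
    refine Integrable.mono' (((hsq k).add (hsq l)).div_const 2) ?_ (ae_of_all _ fun w => ?_)
    · exact ((measurable_pi_apply k).abs.mul (measurable_pi_apply l).abs).aestronglyMeasurable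
    · rw [Real.norm_eq_abs, abs_of_nonneg (mul_nonneg (abs_nonneg _) (abs_nonneg _))]
      simp only [Pi.add_apply]
      nlinarith [sq_nonneg (|w k| - |w l|), sq_abs (w k), sq_abs (w l),
        abs_nonneg (w k), abs_nonneg (w l)]
  refine tendsto_integral_filter_of_dominated_convergence
    (fun w => (∑ k, (|a k| + |u k|) * (|b k| + |u k|)) +
      ∑ k, ∑ l, ((|a k| + |u k|) * (|b l| + |u l|)) * (|w k| * |w l|)) ?_ ?_ ?_ ?_
  · -- measurability
    refine Eventually.of_forall fun t => ?_
    have h1 : Measurable fun w : Fin (n+1) → ℝ =>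
        (∑ k, w k * a k) - t * ∑ k, w k * u k := hpm.sub (hsm.const_mul t)
    have h2 : Measurable fun w : Fin (n+1) → ℝ =>
        (∑ k, w k * b k) - t * ∑ k, w k * u k := hqm.sub (hsm.const_mul t)
    have hX : Measurable fun w : Fin (n+1) → ℝ =>
        (∑ k, (a k - t * u k) * (b k - t * u k)) +
        ((∑ k, w k * a k) - t * ∑ k, w k * u k) * ((∑ k, w k * b k) - t * ∑ k, w k * u k) :=
      measurable_const.add (h1.mul h2)
    have hi1 : Measurable fun w : Fin (n+1) → ℝ =>
        (if 0 ≤ (∑ k, w k * a k) - t * ∑ k, w k * u k then (1:ℝ) else 0) :=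
      Measurable.ite (measurableSet_le measurable_const h1) measurable_const measurable_const
    have hi2 : Measurable fun w : Fin (n+1) → ℝ =>
        (if 0 ≤ (∑ k, w k * b k) - t * ∑ k, w k * u k then (1:ℝ) else 0) :=
      Measurable.ite (measurableSet_le measurable_const h2) measurable_const measurable_const
    exact (((hX.mul hi1).mul hi2).div_const _).aestronglyMeasurable
  · -- bound
    filter_upwards [eventually_ge_atTop (1:ℝ)] with t ht
    refine ae_of_all _ fun w => ?_
    have ht0 : (0:ℝ) < t := lt_of_lt_of_le one_pos ht
    have habs : ∀ x y : ℝ, |x - y| ≤ |x| + |y| := fun x y => by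
      calc |x - y| = |x + -y| := by rw [sub_eq_add_neg]
      _ ≤ |x| + |-y| := abs_add_le _ _
      _ = |x| + |y| := by rw [abs_neg]
    have hterm : ∀ (c : ℝ) (k : Fin (n+1)), |c / t - u k| ≤ |c| + |u k| := by
      intro c k
      have h1 : |c / t| ≤ |c| := by
        rw [abs_div, abs_of_pos ht0]; exact div_le_self (abs_nonneg _) ht
      calc |c / t - u k| ≤ |c / t| + |u k| := habs _ _
      _ ≤ |c| + |u k| := by linarith
    have e1 : ‖F t w‖ ≤ |(∑ k, (a k - t * u k) * (b k - t * u k)) +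
        ((∑ k, w k * a k) - t * ∑ k, w k * u k) * ((∑ k, w k * b k) - t * ∑ k, w k * u k)|
        / t ^ 2 := by
      rw [hF]
      simp only
      rw [Real.norm_eq_abs, abs_div, abs_of_pos (pow_pos ht0 2), abs_mul, abs_mul]
      have hi1 : |if 0 ≤ (∑ k, w k * a k) - t * ∑ k, w k * u k then (1:ℝ) else 0| ≤ 1 := by
        split <;> norm_num
      have hi2 : |if 0 ≤ (∑ k, w k * b k) - t * ∑ k, w k * u k then (1:ℝ) else 0| ≤ 1 := by
        split <;> norm_num
      calc |(∑ k, (a k - t * u k) * (b k - t * u k)) +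
            ((∑ k, w k * a k) - t * ∑ k, w k * u k) * ((∑ k, w k * b k) - t * ∑ k, w k * u k)|
            * |if 0 ≤ (∑ k, w k * a k) - t * ∑ k, w k * u k then (1:ℝ) else 0|
            * |if 0 ≤ (∑ k, w k * b k) - t * ∑ k, w k * u k then (1:ℝ) else 0| / t ^ 2
          ≤ |(∑ k, (a k - t * u k) * (b k - t * u k)) +
            ((∑ k, w k * a k) - t * ∑ k, w k * u k) * ((∑ k, w k * b k) - t * ∑ k, w k * u k)|
            * 1 * 1 / t ^ 2 := by
            gcongr
      _ = _ := by rw [mul_one, mul_one]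
    have hA : |∑ k, (a k - t * u k) * (b k - t * u k)| / t ^ 2
        ≤ ∑ k, (|a k| + |u k|) * (|b k| + |u k|) := by
      have hid : (∑ k, (a k - t * u k) * (b k - t * u k)) / t ^ 2
          = ∑ k, (a k / t - u k) * (b k / t - u k) := by
        rw [Finset.sum_div]
        refine Finset.sum_congr rfl fun k _ => ?_
        have ht' : t ≠ 0 := ht0.ne'
        field_simp
      have h2 : |∑ k, (a k - t * u k) * (b k - t * u k)| / t ^ 2
          = |(∑ k, (a k - t * u k) * (b k - t * u k)) / t ^ 2| := by
        rw [abs_div, abs_of_pos (pow_pos ht0 2)]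
      rw [h2, hid]
      refine (Finset.abs_sum_le_sum_abs _ _).trans (Finset.sum_le_sum fun k _ => ?_)
      rw [abs_mul]
      exact mul_le_mul (hterm _ k) (hterm _ k) (abs_nonneg _)
        (add_nonneg (abs_nonneg _) (abs_nonneg _))
    have hPb : ∀ (c : Fin (n+1) → ℝ),
        |(∑ k, w k * c k) - t * ∑ k, w k * u k| / t ≤ ∑ k, |w k| * (|c k| + |u k|) := by
      intro c
      have hid : ((∑ k, w k * c k) - t * ∑ k, w k * u k) / t
          = ∑ k, w k * (c k / t - u k) := by
        have h1 : ∑ k, w k * (c k / t - u k)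
            = (∑ k, w k * c k)/t - ∑ k, w k * u k := by
          rw [Finset.sum_div, ← Finset.sum_sub_distrib]
          exact Finset.sum_congr rfl fun k _ => by ring
        rw [h1]; field_simp
      have h2 : |(∑ k, w k * c k) - t * ∑ k, w k * u k| / t
          = |((∑ k, w k * c k) - t * ∑ k, w k * u k) / t| := by
        rw [abs_div, abs_of_pos ht0]
      rw [h2, hid]
      refine (Finset.abs_sum_le_sum_abs _ _).trans (Finset.sum_le_sum fun k _ => ?_)
      rw [abs_mul]
      exact mul_le_mul_of_nonneg_left (hterm _ k) (abs_nonneg _)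
    calc ‖F t w‖ ≤ _ := e1
    _ ≤ (|∑ k, (a k - t * u k) * (b k - t * u k)|
          + |(∑ k, w k * a k) - t * ∑ k, w k * u k| * |(∑ k, w k * b k) - t * ∑ k, w k * u k|)
          / t ^ 2 := by
        gcongr
        exact (abs_add_le _ _).trans (by rw [abs_mul])
    _ = |∑ k, (a k - t * u k) * (b k - t * u k)| / t ^ 2
          + (|(∑ k, w k * a k) - t * ∑ k, w k * u k| / t)
          * (|(∑ k, w k * b k) - t * ∑ k, w k * u k| / t) := by
        field_simp
    _ ≤ (∑ k, (|a k| + |u k|) * (|b k| + |u k|))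
          + (∑ k, |w k| * (|a k| + |u k|)) * (∑ k, |w k| * (|b k| + |u k|)) := by
        refine add_le_add hA (mul_le_mul (hPb a) (hPb b) (by positivity) ?_)
        exact Finset.sum_nonneg fun k _ => by positivity
    _ = _ := by
        congr 1
        rw [Finset.sum_mul_sum]
        exact Finset.sum_congr rfl fun k _ => Finset.sum_congr rfl fun l _ => by ring
  · -- integrability of the bound
    refine (integrable_const _).add ?_
    refine integrable_finset_sum _ fun k _ => integrable_finset_sum _ fun l _ => ?_
    exact (habsint k l).const_mul _
  · -- a.e. pointwise convergence
    have hae : ∀ᵐ w ∂γ, ¬ (∑ k, w k * u k = 0) := by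
      rw [ae_iff]
      simp only [not_not]
      exact my_null n u k0 hk
    filter_upwards [hae] with w hw
    have hw' : (∑ k, w k * u k) ≠ 0 := hw
    have l1 : ∀ c : ℝ, Tendsto (fun t : ℝ => c / t) atTop (nhds 0) := fun c =>
      Tendsto.div_atTop tendsto_const_nhds tendsto_id
    rcases hw'.lt_or_gt with hneg | hpos
    · rw [if_pos hneg.le, mul_one]
      have hsum_t : Tendsto (fun t : ℝ => ∑ k, (a k / t - u k) * (b k / t - u k)) atTop
          (nhds (∑ k, u k * u k)) := by
        have := tendsto_finset_sum Finset.univ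
          (fun k (_ : k ∈ Finset.univ) =>
            (((l1 (a k)).sub_const (u k)).mul ((l1 (b k)).sub_const (u k))))
        simpa using this
      have hprod_t : Tendsto (fun t : ℝ =>
          ((∑ k, w k * a k) / t - ∑ k, w k * u k) * ((∑ k, w k * b k) / t - ∑ k, w k * u k))
          atTop (nhds ((∑ k, w k * u k) ^ 2)) := by
        have := ((l1 (∑ k, w k * a k)).sub_const (∑ k, w k * u k)).mul
          ((l1 (∑ k, w k * b k)).sub_const (∑ k, w k * u k))
        simpa [sq] using this
      refine Tendsto.congr' ?_ (hsum_t.add hprod_t)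
      have hPtop : Tendsto (fun t : ℝ => (∑ k, w k * a k) - t * ∑ k, w k * u k) atTop atTop := by
        have h0 : Tendsto (fun t : ℝ => t * (-(∑ k, w k * u k))) atTop atTop :=
          Tendsto.atTop_mul_const (by linarith) tendsto_id
        exact (tendsto_atTop_add_const_left atTop (∑ k, w k * a k) h0).congr fun t => by ring
      have hQtop : Tendsto (fun t : ℝ => (∑ k, w k * b k) - t * ∑ k, w k * u k) atTop atTop := by
        have h0 : Tendsto (fun t : ℝ => t * (-(∑ k, w k * u k))) atTop atTop :=
          Tendsto.atTop_mul_const (by linarith) tendsto_id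
        exact (tendsto_atTop_add_const_left atTop (∑ k, w k * b k) h0).congr fun t => by ring
      filter_upwards [hPtop.eventually_ge_atTop 0, hQtop.eventually_ge_atTop 0,
        eventually_gt_atTop (0:ℝ)] with t h1 h2 h3
      rw [hF]
      simp only
      rw [if_pos h1, if_pos h2, mul_one, mul_one, add_div]
      have ht' : t ≠ 0 := h3.ne'
      congr 1
      · rw [Finset.sum_div]
        refine Finset.sum_congr rfl fun k _ => ?_
        field_simp
      · field_simp
    · rw [if_neg (not_le.2 hpos), mul_zero]
      have hPbot : Tendsto (fun t : ℝ => (∑ k, w k * a k) - t * ∑ k, w k * u k) atTop atBot := by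
        have h0 : Tendsto (fun t : ℝ => t * ∑ k, w k * u k) atTop atTop :=
          Tendsto.atTop_mul_const hpos tendsto_id
        have h2 : Tendsto (fun t : ℝ => -(t * ∑ k, w k * u k)) atTop atBot :=
          tendsto_neg_atTop_atBot.comp h0
        exact (tendsto_atBot_add_const_left atTop (∑ k, w k * a k) h2).congr fun t => by ring
      refine Tendsto.congr' ?_ tendsto_const_nhds
      filter_upwards [hPbot.eventually_lt_atBot 0] with t h1
      rw [hF]
      simp only
      rw [if_neg (not_le.2 h1), mul_zero, zero_mul, zero_div]

/-- The (i,j) NTK gram entry K(t) on the translated training set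
satisfies lim_{t→∞} K(t)/t² = κ = ∫ (‖v̂‖² + ⟨w,v̂⟩²)·𝟙(⟨w,v̂⟩ ≤ 0) dγ(w). -/
theorem stmt_4 (d : ℕ) (hd : 1 ≤ d)
    (γ : Measure (Fin (d + 1) → ℝ))
    (hγ : γ = Measure.pi fun _ => gaussianReal 0 1)
    (xi xj v : Fin d → ℝ) (hv : v ≠ 0)
    (xihat : Fin (d + 1) → ℝ) (hxi : xihat = Fin.snoc xi 1)
    (xjhat : Fin (d + 1) → ℝ) (hxj : xjhat = Fin.snoc xj 1)
    (vhat : Fin (d + 1) → ℝ) (hvh : vhat = Fin.snoc v 0)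
    (K : ℝ → ℝ)
    (hK : ∀ t : ℝ, K t =
      ∫ w, ((∑ k, (xihat k - t * vhat k) * (xjhat k - t * vhat k)) +
            (∑ k, w k * (xihat k - t * vhat k)) * (∑ k, w k * (xjhat k - t * vhat k))) *
          (if 0 ≤ ∑ k, w k * (xihat k - t * vhat k) then (1 : ℝ) else 0) *
          (if 0 ≤ ∑ k, w k * (xjhat k - t * vhat k) then (1 : ℝ) else 0) ∂γ)
    (κ : ℝ)
    (hκ : κ = ∫ w, ((∑ k, vhat k * vhat k) + (∑ k, w k * vhat k) ^ 2) *
        (if (∑ k, w k * vhat k) ≤ 0 then (1 : ℝ) else 0) ∂γ) :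
    Tendsto (fun t : ℝ => K t / t ^ 2) atTop (nhds κ) := by
  obtain ⟨k, hk⟩ : ∃ k, v k ≠ 0 := by
    by_contra h
    push_neg at h
    exact hv (funext h)
  have hk' : vhat (Fin.castSucc k) ≠ 0 := by rw [hvh, Fin.snoc_castSucc]; exact hk
  subst hγ hκ
  have h := aux_main d xihat xjhat vhat (Fin.castSucc k) hk'
  refine Tendsto.congr (fun t => ?_) h
  rw [hK]
end

section
/- Let V be a real vector space, let z ≥ 1 be a natural number, let h ∈ ℝ, let x₀, v ∈ V, and let I : ℕ → ℝ. Write x_i = x₀ + (i·h)·v for i = 0, 1, …, z. Then ∑_{i=0}^{z} (−1)^{z−i}·C(z,i)·I(i) · x_i = ( ∑_{i=0}^{z} (−1)^{z−i}·C(z,i)·I(i) ) · x_z + ( z·h·∑_{i=0}^{z−1} (−1)^{z−1−i}·C(z−1,i)·I(i) ) · v, where C(z,i) is the binomial coefficient. -/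
/-- For x_i = x₀ + (i·h)·v, the alternating-Pascal weighted sum
∑_{i=0}^{z} (−1)^{z−i}·C(z,i)·I(i)·x_i equals
(∑_{i=0}^{z} (−1)^{z−i}·C(z,i)·I(i))·x_z + (z·h·∑_{i=0}^{z−1} (−1)^{z−1−i}·C(z−1,i)·I(i))·v. -/
theorem stmt_6 (V : Type*) [AddCommGroup V] [Module ℝ V]
    (z : ℕ) (hz : 1 ≤ z) (h : ℝ) (x₀ v : V) (I : ℕ → ℝ)
    (x : ℕ → V) (hx : ∀ i : ℕ, x i = x₀ + ((i : ℝ) * h) • v) :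
    ∑ i ∈ Finset.range (z + 1), ((-1 : ℝ) ^ (z - i) * (z.choose i : ℝ) * I i) • x i =
      (∑ i ∈ Finset.range (z + 1), (-1 : ℝ) ^ (z - i) * (z.choose i : ℝ) * I i) • x z +
      ((z : ℝ) * h *
        ∑ i ∈ Finset.range z, (-1 : ℝ) ^ (z - 1 - i) * ((z - 1).choose i : ℝ) * I i) • v := by
  have key : ∀ i : ℕ, x i = x z + (((i : ℝ) - (z : ℝ)) * h) • v := by
    intro i
    rw [hx i, hx z]
    module
  have scalar : ∑ i ∈ Finset.range (z + 1),
      ((-1 : ℝ) ^ (z - i) * (z.choose i : ℝ) * I i) * (((i : ℝ) - (z : ℝ)) * h) =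
      (z : ℝ) * h * ∑ i ∈ Finset.range z,
        (-1 : ℝ) ^ (z - 1 - i) * ((z - 1).choose i : ℝ) * I i := by
    rw [Finset.sum_range_succ, Finset.mul_sum]
    simp only [sub_self, zero_mul, mul_zero, add_zero]
    apply Finset.sum_congr rfl
    intro i hi
    have hiz : i < z := Finset.mem_range.mp hi
    have h1 : z - i = (z - 1 - i) + 1 := by omega
    have h2 : ((z - 1).choose i : ℝ) * (z : ℝ) = (z.choose i : ℝ) * ((z : ℝ) - (i : ℝ)) := by
      have hn := Nat.choose_mul_succ_eq (z - 1) i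
      rw [Nat.sub_add_cancel hz] at hn
      have : (((z - 1).choose i * z : ℕ) : ℝ) = ((z.choose i * (z - i) : ℕ) : ℝ) := by
        exact_mod_cast congrArg Nat.cast hn
      push_cast [Nat.cast_sub hiz.le] at this
      linarith
    rw [h1, pow_succ]
    linear_combination (-(-1 : ℝ) ^ (z - 1 - i) * I i * h) * h2
  calc ∑ i ∈ Finset.range (z + 1), ((-1 : ℝ) ^ (z - i) * (z.choose i : ℝ) * I i) • x i
      = ∑ i ∈ Finset.range (z + 1), (((-1 : ℝ) ^ (z - i) * (z.choose i : ℝ) * I i) • x z +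
          (((-1 : ℝ) ^ (z - i) * (z.choose i : ℝ) * I i) * (((i : ℝ) - (z : ℝ)) * h)) • v) := by
        apply Finset.sum_congr rfl
        intro i _
        rw [key i, smul_add, smul_smul]
    _ = (∑ i ∈ Finset.range (z + 1), (-1 : ℝ) ^ (z - i) * (z.choose i : ℝ) * I i) • x z +
        (∑ i ∈ Finset.range (z + 1),
          ((-1 : ℝ) ^ (z - i) * (z.choose i : ℝ) * I i) * (((i : ℝ) - (z : ℝ)) * h)) • v := by
        rw [Finset.sum_add_distrib, ← Finset.sum_smul, ← Finset.sum_smul]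
    _ = _ := by rw [scalar]
end

section
/- Let V be a real normed vector space, let z ≥ 1 be a natural number, let g : ℝ → ℝ be z times continuously differentiable, and let x₀, v ∈ V. Define F : ℝ → V by F(t) = g(t) · (x₀ + t·v). Then for every t₀ ∈ ℝ, the z-th derivative of F at t₀ equals g^{(z)}(t₀) · (x₀ + t₀·v) + z · g^{(z−1)}(t₀) · v. -/
theorem iteratedDeriv_fun_id_mul {𝕜 : Type*} [NontriviallyNormedField 𝕜] {n : ℕ} {f : 𝕜 → 𝕜}
    {x : 𝕜} (hf : ContDiffAt 𝕜 n f x) :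
    iteratedDeriv n (fun t => t * f t) x =
      x * iteratedDeriv n f x + n * iteratedDeriv (n - 1) f x := by
  rw [iteratedDeriv_fun_mul contDiffAt_fun_id hf]
  rcases n with _ | n
  · simp
  · simp [Finset.sum_range_succ', iteratedDeriv_fun_id]
    ring

theorem stmt_7_general (V : Type*) [NormedAddCommGroup V] [NormedSpace ℝ V]
    (z : ℕ) (g : ℝ → ℝ) (hg : ContDiff ℝ (z : ℕ∞) g)
    (x₀ v : V) (F : ℝ → V) (hF : ∀ t : ℝ, F t = g t • (x₀ + t • v)) (t₀ : ℝ) :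
    iteratedDeriv z F t₀ =
      (iteratedDeriv z g t₀) • (x₀ + t₀ • v) +
        ((z : ℝ) * iteratedDeriv (z - 1) g t₀) • v := by
  have hg : ContDiff ℝ z g := hg
  have hid : ContDiff ℝ z fun t : ℝ => t * g t := contDiff_fun_id.mul hg
  have hF : F = fun t => g t • x₀ + (t * g t) • v := by
    funext t
    rw [hF, smul_add, smul_smul, mul_comm]
  have h₁ : ContDiffAt ℝ z (fun t => g t • x₀) t₀ := (hg.smul contDiff_const).contDiffAt
  have h₂ : ContDiffAt ℝ z (fun t => (t * g t) • v) t₀ := (hid.smul contDiff_const).contDiffAt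
  rw [hF, iteratedDeriv_fun_add h₁ h₂, iteratedDeriv_smul_const hg.contDiffAt,
    iteratedDeriv_smul_const hid.contDiffAt, iteratedDeriv_fun_id_mul hg.contDiffAt,
    smul_add, add_smul, smul_smul, add_assoc, mul_comm t₀]

/-- If g : ℝ → ℝ is z-times continuously differentiable (z ≥ 1) and
F(t) = g(t)·(x₀ + t·v) in a real normed space V, then
F^{(z)}(t₀) = g^{(z)}(t₀)·(x₀ + t₀·v) + z·g^{(z−1)}(t₀)·v. -/
theorem stmt_7 (V : Type*) [NormedAddCommGroup V] [NormedSpace ℝ V]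
    (z : ℕ) (hz : 1 ≤ z) (g : ℝ → ℝ) (hg : ContDiff ℝ (z : ℕ∞) g)
    (x₀ v : V) (F : ℝ → V) (hF : ∀ t : ℝ, F t = g t • (x₀ + t • v)) (t₀ : ℝ) :
    iteratedDeriv z F t₀ =
      (iteratedDeriv z g t₀) • (x₀ + t₀ • v) +
        ((z : ℝ) * iteratedDeriv (z - 1) g t₀) • v :=
  stmt_7_general V z g hg x₀ v F hF t₀
end
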